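/- If each school choice function satisfies |Ch_{c_i}(X)| = min{q_{c_i}, |X_{c_i}|} for all X, then the sequential district admissions rule Ch_d (schools choose in a fixed order with removal of previously chosen students' contracts) is acceptant: for any matching X feasible for students and any x = (s,d,c) ∈ X_d \ Ch_d(X), the school c fills its capacity q_c in Ch_d(X). -/

import Mathlib

/-!
Let `A` be the set of contracts chosen by the schools preceding `c = sch x`. Then the contracts
of `c` in `Ch_d(X)` are exactly `Ch_c(Y)`, where `Y` is `X` without the contracts of students
in `A`. Since `x` is rejected it is not in `A`, and by feasibility no other contract of its
student is, so `x ∈ Y_c \ Ch_c(Y)`. Hence `Ch_c(Y)` is a proper subset of `Y_c`, and the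
cardinality condition forces `|Ch_c(Y)| = q_c`.
-/

open Finset

section

variable {K S : Type*} [DecidableEq K] [DecidableEq S]

/-- A set of contracts is feasible for students (at most one contract per
student). -/
def feasibleS (st : K → S) (X : Finset K) : Prop :=
  ∀ x ∈ X, ∀ y ∈ X, st x = st y → x = y

/-- The sequential district admissions rule: schools choose in the fixed
order `c_1, …, c_n`; when a school chooses, all contracts of previously
chosen students are removed. -/
def seqCh {n : ℕ} (st : K → S) (Chs : Fin n → Finset K → Finset K)
    (X : Finset K) : Finset K :=
  (List.finRange n).foldl
    (fun acc i => acc ∪ Chs i (X.filter (fun x => ∀ y ∈ acc, st y ≠ st x))) ∅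

theorem card_eq_of_card_eq_min_of_mem_of_notMem {α : Type*} {C Y : Finset α} {q : ℕ} {x : α}
    (hCY : C ⊆ Y) (hcard : C.card = min q Y.card) (hx : x ∈ Y) (hxC : x ∉ C) :
    C.card = q := by
  have hlt : C.card < Y.card := card_lt_card ⟨hCY, fun hYC => hxC (hYC hx)⟩
  omega

section

variable {n : ℕ} (st : K → S) (Chs : Fin n → Finset K → Finset K) (X : Finset K)

def seqStep (acc : Finset K) (i : Fin n) : Finset K :=
  acc ∪ Chs i (X.filter fun x => ∀ y ∈ acc, st y ≠ st x)

theorem seqCh_eq_foldl_seqStep :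
    seqCh st Chs X = (List.finRange n).foldl (seqStep st Chs X) ∅ :=
  rfl

theorem subset_foldl_seqStep (l : List (Fin n)) (acc : Finset K) :
    acc ⊆ l.foldl (seqStep st Chs X) acc :=
  List.foldlRecOn (motive := (acc ⊆ ·)) l _ subset_rfl
    fun _ hb _ _ => hb.trans subset_union_left

variable {st Chs X}

theorem foldl_seqStep_subset (hsub : ∀ i Y, Chs i Y ⊆ Y) (l : List (Fin n)) {acc : Finset K}
    (hacc : acc ⊆ X) : l.foldl (seqStep st Chs X) acc ⊆ X :=
  List.foldlRecOn (motive := (· ⊆ X)) l _ hacc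
    fun _ hb i _ => union_subset hb ((hsub i _).trans (filter_subset _ _))

theorem filter_foldl_seqStep_of_notMem {sch : K → Fin n}
    (hsub : ∀ i Y, Chs i Y ⊆ Y.filter (sch · = i)) {i : Fin n} {l : List (Fin n)}
    (hi : i ∉ l) (acc : Finset K) :
    (l.foldl (seqStep st Chs X) acc).filter (sch · = i) = acc.filter (sch · = i) := by
  refine List.foldlRecOn
    (motive := fun b : Finset K => b.filter (sch · = i) = acc.filter (sch · = i)) l _ rfl
    fun b hb j hj => ?_
  have hji : j ≠ i := fun h => hi (h ▸ hj)
  have hempty : (Chs j (X.filter fun x => ∀ y ∈ b, st y ≠ st x)).filter (sch · = i) = ∅ :=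
    filter_eq_empty_iff.mpr fun y hy => (mem_filter.mp (hsub j _ hy)).2 ▸ hji
  rw [seqStep, filter_union, hb, hempty, union_empty]

theorem exists_filter_seqCh_eq {sch : K → Fin n}
    (hsub : ∀ i Y, Chs i Y ⊆ Y.filter (sch · = i)) (i : Fin n) :
    ∃ A ⊆ seqCh st Chs X, A ⊆ X ∧
      (seqCh st Chs X).filter (sch · = i) =
        Chs i (X.filter fun x => ∀ y ∈ A, st y ≠ st x) := by
  obtain ⟨l₁, l₂, hl⟩ := List.append_of_mem (List.mem_finRange i)
  have hnd : (i :: (l₁ ++ l₂)).Nodup := List.nodup_middle.mp (hl ▸ List.nodup_finRange n)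
  have hi : i ∉ l₁ ∧ i ∉ l₂ := by simpa using (List.nodup_cons.mp hnd).1
  set A := l₁.foldl (seqStep st Chs X) ∅
  have hsplit : seqCh st Chs X = l₂.foldl (seqStep st Chs X) (seqStep st Chs X A i) := by
    rw [seqCh_eq_foldl_seqStep, hl, List.foldl_append, List.foldl_cons]
  refine ⟨A, ?_, foldl_seqStep_subset (fun i Y => (hsub i Y).trans (filter_subset _ _)) l₁
    (empty_subset X), ?_⟩
  · rw [hsplit]
    exact subset_union_left.trans (subset_foldl_seqStep st Chs X l₂ _)
  · rw [hsplit, filter_foldl_seqStep_of_notMem hsub hi.2, seqStep, filter_union,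
      filter_foldl_seqStep_of_notMem hsub hi.1, filter_empty, empty_union,
      filter_true_of_mem fun y hy => (mem_filter.mp (hsub i _ hy)).2]

end

/-- If each school chooses `min{q_c, |X_c|}` contracts from any set, then the
sequential district admissions rule is acceptant: every rejected contract's
school fills its capacity. -/
theorem seqCh_acceptant {n : ℕ}
    (st : K → S) (sch : K → Fin n) (q : Fin n → ℕ)
    (Chs : Fin n → Finset K → Finset K)
    (hsub : ∀ i X, Chs i X ⊆ X.filter (fun x => sch x = i))
    (hcard : ∀ i (X : Finset K),
      (Chs i X).card = min (q i) ((X.filter (fun x => sch x = i)).card)) :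
    ∀ (X : Finset K), feasibleS st X → ∀ x ∈ X, x ∉ seqCh st Chs X →
      ((seqCh st Chs X).filter (fun y => sch y = sch x)).card = q (sch x) := by
  intro X hfeas x hx hrej
  obtain ⟨A, hA, hAX, hfilter⟩ := exists_filter_seqCh_eq (st := st) (X := X) hsub (sch x)
  set Y := X.filter fun z => ∀ y ∈ A, st y ≠ st z
  have hxY : x ∈ Y.filter (sch · = sch x) := by
    refine mem_filter.mpr ⟨mem_filter.mpr ⟨hx, fun y hy hst => ?_⟩, rfl⟩
    exact hrej (hA (hfeas y (hAX hy) x hx hst ▸ hy))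
  have hxC : x ∉ Chs (sch x) Y := fun h => hrej (filter_subset _ _ (hfilter ▸ h))
  rw [hfilter]
  exact card_eq_of_card_eq_min_of_mem_of_notMem (hsub _ Y) (hcard _ Y) hxY hxC

end
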